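/- Let (ℙ̄_n)_{n∈ℕ} be probability measures on (Ω̄, 𝓕̄) such that for every n: (a) the Ω-marginal of ℙ̄_n equals ℙ, and (b) for every t ∈ [0,T], ℙ̄_n[Θ ≤ t | 𝓕̄⁰] = ℙ̄_n[Θ ≤ t | 𝓕̄⁰_t] ℙ̄_n-almost surely. If ℙ̄_n converges stably to a probability measure ℙ̄ on (Ω̄, 𝓕̄), then ℙ̄ also satisfies (a) and (b). In other words, the set of probability measures on (Ω̄, 𝓕̄) satisfying (a) and (b) is sequentially closed for stable convergence. -/

import Mathlib

/-!
Given the marginal `ℙ`, property (b) at level `u` says that one may replace `g(ω)` by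
`E_ℙ[g | 𝓕_u](ω)` when integrating over `{Θ ≤ u}`, and by the tower property `𝓕_u` may then
be replaced by any `𝓕_s` with `s ≥ u`. Averaging over `u ∈ (t, s']` turns `1{Θ ≤ u}` into a
ramp that is continuous in `Θ`, so the averaged identity passes to the stable limit (as does
(a), tested against cylinder indicators). Letting `s' ↓ t` by dominated convergence gives, for
`ℙ̄` and every `s > t`, that `ℙ̄[Θ ≤ t | 𝓕̄⁰]` agrees a.s. with an `𝓕̄⁰_s`-measurable function;
by right-continuity of the filtration it is then a.s. `𝓕̄⁰_t`-measurable, which is (b).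
-/

open MeasureTheory Filter Set Topology

noncomputable section

section Ramp

/-- For `t < s`: `1` on `θ ≤ t`, `0` on `θ ≥ s`, affine in between. -/
def ramp (t s θ : ℝ) : ℝ := max (s - max t θ) 0 / (s - t)

lemma continuous_ramp (t s : ℝ) : Continuous (ramp t s) := by
  unfold ramp; fun_prop

lemma abs_ramp_le_one {t s : ℝ} (hts : t < s) (θ : ℝ) : |ramp t s θ| ≤ 1 := by
  have hst : 0 < s - t := sub_pos.2 hts
  rw [ramp, abs_of_nonneg (div_nonneg (le_max_right _ _) hst.le), div_le_one hst]
  exact max_le (by linarith [le_max_left t θ]) hst.le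

lemma tendsto_ramp_nhdsGT (t θ : ℝ) :
    Tendsto (fun s => ramp t s θ) (𝓝[>] t) (𝓝 (if θ ≤ t then 1 else 0)) := by
  split_ifs with hθ
  · refine tendsto_const_nhds.congr' (eventually_nhdsWithin_of_forall fun s hs => ?_)
    dsimp only
    rw [eq_comm, ramp, max_eq_left hθ, max_eq_left (sub_nonneg.2 hs.le),
      div_self (sub_pos.2 hs).ne']
  · refine tendsto_const_nhds.congr' (eventually_of_mem (Ioo_mem_nhdsGT (not_le.1 hθ)) ?_)
    intro s hs
    dsimp only
    rw [eq_comm, ramp, max_eq_right (not_le.1 hθ).le, max_eq_right (by linarith [hs.2]), zero_div]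

lemma measureReal_Ici_inter_Ioc (θ t s : ℝ) :
    volume.real (Ici θ ∩ Ioc t s) = max (s - max t θ) 0 := by
  have hsub : Ici θ ∩ Ioc t s ⊆ Icc (max t θ) s :=
    fun u hu => ⟨max_le hu.2.1.le hu.1, hu.2.2⟩
  have hsup : Ioo (max t θ) s ⊆ Ici θ ∩ Ioc t s := fun u hu =>
    ⟨(le_max_right t θ).trans hu.1.le, (le_max_left t θ).trans_lt hu.1, hu.2.le⟩
  have hvol : volume (Ici θ ∩ Ioc t s) = ENNReal.ofReal (s - max t θ) :=
    le_antisymm ((measure_mono hsub).trans_eq Real.volume_Icc)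
      (Real.volume_Ioo.symm.trans_le (measure_mono hsup))
  rw [measureReal_def, hvol, ENNReal.toReal_ofReal']

variable {α : Type*} [MeasurableSpace α] {μ : Measure α} {θ h : α → ℝ}

/-- Averaging `1{θ ≤ u}` over `u ∈ (t, s]` gives `ramp t s θ`. -/
lemma integral_mul_ramp [SFinite μ] (hθ : Measurable θ) (hh : Integrable h μ) {t s : ℝ}
    (hts : t < s) :
    ∫ x, h x * ramp t s (θ x) ∂μ = (∫ u in Ioc t s, ∫ x in {x | θ x ≤ u}, h x ∂μ) / (s - t) := by
  have hst : 0 < s - t := sub_pos.2 hts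
  have : IsFiniteMeasure (volume.restrict (Ioc t s)) := ⟨by simp⟩
  set H : α × ℝ → ℝ := {q | θ q.1 ≤ q.2}.indicator fun q => h q.1
  have hH : Integrable H (μ.prod (volume.restrict (Ioc t s))) :=
    (hh.comp_fst _).indicator (measurableSet_le (hθ.comp measurable_fst) measurable_snd)
  have hinner : ∀ x, ∫ u in Ioc t s, H (x, u) = h x * ramp t s (θ x) * (s - t) := fun x => by
    change ∫ u in Ioc t s, (Ici (θ x)).indicator (fun _ => h x) u = _
    rw [integral_indicator_const _ measurableSet_Ici, measureReal_restrict_apply measurableSet_Ici,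
      measureReal_Ici_inter_Ioc, ramp, smul_eq_mul]
    field_simp
  rw [eq_div_iff hst.ne', ← integral_mul_const]
  simp_rw [← hinner]
  rw [integral_integral_swap (f := fun x u => H (x, u)) hH]
  refine integral_congr_ae (ae_of_all _ fun u => ?_)
  exact integral_indicator (measurableSet_le hθ measurable_const)

lemma integral_mul_ramp_eq_of_setIntegral_eq [SFinite μ] (hθ : Measurable θ) {h' : α → ℝ}
    (hh : Integrable h μ) (hh' : Integrable h' μ) {t s : ℝ} (hts : t < s)
    (heq : ∀ u ∈ Ioc t s, ∫ x in {x | θ x ≤ u}, h x ∂μ = ∫ x in {x | θ x ≤ u}, h' x ∂μ) :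
    ∫ x, h x * ramp t s (θ x) ∂μ = ∫ x, h' x * ramp t s (θ x) ∂μ := by
  rw [integral_mul_ramp hθ hh hts, integral_mul_ramp hθ hh' hts,
    setIntegral_congr_fun measurableSet_Ioc heq]

lemma tendsto_integral_mul_ramp (hθ : Measurable θ) (hh : Integrable h μ) (t : ℝ) :
    Tendsto (fun s => ∫ x, h x * ramp t s (θ x) ∂μ) (𝓝[>] t)
      (𝓝 (∫ x in {x | θ x ≤ t}, h x ∂μ)) := by
  rw [← integral_indicator (measurableSet_le hθ measurable_const)]
  refine tendsto_integral_filter_of_dominated_convergence (fun x => ‖h x‖)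
    (Eventually.of_forall fun s => hh.aestronglyMeasurable.mul
      ((continuous_ramp t s).measurable.comp hθ).aestronglyMeasurable)
    (eventually_nhdsWithin_of_forall fun s hs => ae_of_all _ fun x => ?_) hh.norm
    (ae_of_all _ fun x => ?_)
  · rw [norm_mul, Real.norm_eq_abs (ramp _ _ _)]
    exact mul_le_of_le_one_right (norm_nonneg _) (abs_ramp_le_one hs _)
  · convert (tendsto_ramp_nhdsGT t (θ x)).const_mul (h x) using 2
    by_cases hx : θ x ≤ t <;> simp [hx]

end Ramp

section CondExp

variable {α : Type*} {m m' mα : MeasurableSpace α} {μ : Measure α}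

lemma integral_indicator_one_mul {s : Set α} (hs : MeasurableSet s) (f : α → ℝ) :
    ∫ x, s.indicator (fun _ => (1 : ℝ)) x * f x ∂μ = ∫ x in s, f x ∂μ := by
  rw [← integral_indicator hs]
  congr 1 with x
  by_cases hx : x ∈ s <;> simp [hx]

lemma exists_measurable_abs_le_ae_eq {f : α → ℝ} (hf : Measurable f) {C : ℝ} (hC : 0 ≤ C)
    (hfC : ∀ᵐ x ∂μ, |f x| ≤ C) : ∃ g : α → ℝ, Measurable g ∧ (∀ x, |g x| ≤ C) ∧ g =ᵐ[μ] f := by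
  refine ⟨fun x => max (-C) (min C (f x)), measurable_const.max (measurable_const.min hf),
    fun x => abs_le.2 ⟨le_max_left _ _, max_le (by linarith) (min_le_left _ _)⟩, ?_⟩
  filter_upwards [hfC] with x hx
  rw [min_eq_right (abs_le.1 hx).2, max_eq_right (abs_le.1 hx).1]

/-- Self-adjointness of the conditional expectation, tested against an indicator. -/
lemma setIntegral_condExp_eq_integral_mul_condExp_indicator (hm : m ≤ mα) [IsFiniteMeasure μ]
    {f : α → ℝ} (hf : Integrable f μ) {s : Set α} (hs : MeasurableSet s) :
    ∫ x in s, μ[f|m] x ∂μ = ∫ x, f x * μ[s.indicator (fun _ => (1 : ℝ))|m] x ∂μ := by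
  set e : α → ℝ := s.indicator fun _ => 1
  have he : Integrable e μ := (integrable_const 1).indicator hs
  have he_le : ∀ᵐ x ∂μ, ‖e x‖ ≤ 1 := ae_of_all _ fun x => by
    by_cases hx : x ∈ s <;> simp [e, hx]
  have hce_le : ∀ᵐ x ∂μ, ‖μ[e|m] x‖ ≤ 1 := ae_bdd_norm_condExp_of_ae_bdd_norm he_le
  calc ∫ x in s, μ[f|m] x ∂μ = ∫ x, μ[e * μ[f|m]|m] x ∂μ :=
        ((integral_indicator_one_mul hs _).symm.trans (integral_condExp hm).symm)
    _ = ∫ x, μ[e|m] x * μ[f|m] x ∂μ := integral_congr_ae <|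
        condExp_mul_of_stronglyMeasurable_right stronglyMeasurable_condExp
          (integrable_condExp.bdd_mul he.aestronglyMeasurable he_le) he
    _ = ∫ x, μ[f * μ[e|m]|m] x ∂μ := by
        refine integral_congr_ae ?_
        filter_upwards [condExp_mul_of_stronglyMeasurable_right stronglyMeasurable_condExp
          (hf.mul_bdd integrable_condExp.aestronglyMeasurable hce_le) hf] with x hx
        rw [hx, Pi.mul_apply, mul_comm]
    _ = ∫ x, f x * μ[e|m] x ∂μ := integral_condExp hm

lemma condExp_ae_eq_of_aestronglyMeasurable_condExp (hmm' : m ≤ m') (hm' : m' ≤ mα)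
    [IsFiniteMeasure μ] {f : α → ℝ} (hf : AEStronglyMeasurable[m] (μ[f|m']) μ) :
    μ[f|m'] =ᵐ[μ] μ[f|m] :=
  (condExp_of_aestronglyMeasurable' (hmm'.trans hm') hf integrable_condExp).symm.trans
    (condExp_condExp_of_le hmm' hm')

end CondExp

section Marginal

variable {α β γ : Type*} {G H : MeasurableSpace α} [mα : MeasurableSpace α] [MeasurableSpace β]
  {P : Measure α} {Q : Measure (α × β)}

lemma integrable_comp_fst_of_map_eq (hQ : Q.map Prod.fst = P) {g : α → ℝ} (hg : Integrable g P) :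
    Integrable (fun p : α × β => g p.1) Q :=
  (hQ ▸ hg).comp_measurable measurable_fst

lemma ae_eq_comp_fst_of_map_eq (hQ : Q.map Prod.fst = P) {f g : α → γ} (h : f =ᵐ[P] g) :
    (fun p : α × β => f p.1) =ᵐ[Q] fun p => g p.1 :=
  ae_eq_comp measurable_fst.aemeasurable (hQ ▸ h)

lemma condExp_comp_fst [IsFiniteMeasure Q] (hQ : Q.map Prod.fst = P)
    (hG : G ≤ mα) {g : α → ℝ} (hg : Integrable g P) :
    Q[fun p => g p.1|G.comap Prod.fst] =ᵐ[Q] fun p => P[g|G] p.1 := by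
  subst hQ
  refine (ae_eq_condExp_of_forall_setIntegral_eq ((MeasurableSpace.comap_mono hG).trans
    measurable_fst.comap_le) (integrable_comp_fst_of_map_eq rfl hg)
    (fun _ _ _ => (integrable_comp_fst_of_map_eq rfl integrable_condExp).integrableOn)
    ?_ (stronglyMeasurable_condExp.comp_measurable
      (comap_measurable Prod.fst)).aestronglyMeasurable).symm
  rintro _ ⟨A, hA, rfl⟩ -
  have hpre : ∀ f : α → ℝ, AEStronglyMeasurable f (Q.map Prod.fst) →
      ∫ p in Prod.fst ⁻¹' A, f p.1 ∂Q = ∫ a in A, f a ∂(Q.map Prod.fst) := fun f hf =>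
    (setIntegral_map (hG A hA) hf measurable_fst.aemeasurable).symm
  rw [hpre _ (stronglyMeasurable_condExp.mono hG).aestronglyMeasurable,
    setIntegral_condExp hG hg hA, hpre _ hg.aestronglyMeasurable]

lemma setIntegral_comp_fst_eq_condExp [IsFiniteMeasure Q] (hQ : Q.map Prod.fst = P)
    (hG : G ≤ mα) {E : Set (α × β)} (hE : MeasurableSet E)
    (hcond : Q[E.indicator (fun _ => (1 : ℝ))|mα.comap Prod.fst]
      =ᵐ[Q] Q[E.indicator (fun _ => (1 : ℝ))|G.comap Prod.fst])
    {g : α → ℝ} (hg : Integrable g P) :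
    ∫ p in E, g p.1 ∂Q = ∫ p in E, P[g|G] p.1 ∂Q := by
  subst hQ
  have hM : mα.comap Prod.fst ≤ (inferInstance : MeasurableSpace (α × β)) :=
    measurable_fst.comap_le
  have hself : Q[fun p => g p.1|mα.comap Prod.fst] =ᵐ[Q] fun p => g p.1 :=
    (condExp_comp_fst rfl le_rfl hg).trans (ae_eq_comp_fst_of_map_eq rfl
      (condExp_of_aestronglyMeasurable' le_rfl hg.aestronglyMeasurable hg))
  have hg' := integrable_comp_fst_of_map_eq rfl hg
  calc ∫ p in E, g p.1 ∂Q = ∫ p in E, Q[fun p => g p.1|mα.comap Prod.fst] p ∂Q :=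
        integral_congr_ae (ae_restrict_of_ae hself.symm)
    _ = ∫ p, g p.1 * Q[E.indicator (fun _ => (1 : ℝ))|mα.comap Prod.fst] p ∂Q :=
        setIntegral_condExp_eq_integral_mul_condExp_indicator hM hg' hE
    _ = ∫ p, g p.1 * Q[E.indicator (fun _ => (1 : ℝ))|G.comap Prod.fst] p ∂Q :=
        integral_congr_ae (EventuallyEq.rfl.mul hcond)
    _ = ∫ p in E, Q[fun p => g p.1|G.comap Prod.fst] p ∂Q :=
        (setIntegral_condExp_eq_integral_mul_condExp_indicator
          ((MeasurableSpace.comap_mono hG).trans hM) hg' hE).symm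
    _ = ∫ p in E, (Q.map Prod.fst)[g|G] p.1 ∂Q :=
        integral_congr_ae (ae_restrict_of_ae (condExp_comp_fst rfl hG hg))

lemma condExp_indicator_comap_fst_ae_eq [IsFiniteMeasure Q] (hQ : Q.map Prod.fst = P)
    (hG : G ≤ mα) {E : Set (α × β)} (hE : MeasurableSet E)
    (h : ∀ A, MeasurableSet A → ∫ p in E, A.indicator (fun _ => (1 : ℝ)) p.1 ∂Q
      = ∫ p in E, P[A.indicator (fun _ => (1 : ℝ))|G] p.1 ∂Q) :
    Q[E.indicator (fun _ => (1 : ℝ))|G.comap Prod.fst]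
      =ᵐ[Q] Q[E.indicator (fun _ => (1 : ℝ))|mα.comap Prod.fst] := by
  subst hQ
  have hM : mα.comap Prod.fst ≤ (inferInstance : MeasurableSpace (α × β)) :=
    measurable_fst.comap_le
  have hGM : G.comap (Prod.fst : α × β → α) ≤ mα.comap Prod.fst := MeasurableSpace.comap_mono hG
  refine ae_eq_condExp_of_forall_setIntegral_eq hM ((integrable_const _).indicator hE)
    (fun _ _ _ => integrable_condExp.integrableOn) ?_
    (stronglyMeasurable_condExp.mono hGM).aestronglyMeasurable
  rintro _ ⟨A, hA, rfl⟩ -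
  have hA' : MeasurableSet A := hA
  have h1A : Integrable (A.indicator fun _ => (1 : ℝ)) (Q.map Prod.fst) :=
    (integrable_const _).indicator hA'
  calc ∫ p in Prod.fst ⁻¹' A, Q[E.indicator (fun _ => (1 : ℝ))|G.comap Prod.fst] p ∂Q
      = ∫ p, E.indicator (fun _ => (1 : ℝ)) p
          * Q[fun p => A.indicator (fun _ => (1 : ℝ)) p.1|G.comap Prod.fst] p ∂Q :=
        setIntegral_condExp_eq_integral_mul_condExp_indicator (hGM.trans hM)
          ((integrable_const _).indicator hE) (measurable_fst hA')
    _ = ∫ p in E, (Q.map Prod.fst)[A.indicator (fun _ => (1 : ℝ))|G] p.1 ∂Q := by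
        rw [← integral_indicator_one_mul hE]
        exact integral_congr_ae (EventuallyEq.rfl.mul (condExp_comp_fst rfl hG h1A))
    _ = ∫ p in E, A.indicator (fun _ => (1 : ℝ)) p.1 ∂Q := (h A hA').symm
    _ = ∫ p in Prod.fst ⁻¹' A, E.indicator (fun _ => (1 : ℝ)) p ∂Q := by
        rw [← integral_indicator_one_mul hE, ← integral_indicator_one_mul (measurable_fst hA')]
        congr 1 with p
        rw [mul_comm]
        rfl

lemma setIntegral_comp_fst_eq_condExp_of_le [IsFiniteMeasure Q] (hQ : Q.map Prod.fst = P)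
    (hGH : G ≤ H) (hH : H ≤ mα) {E : Set (α × β)} (hE : MeasurableSet E)
    (hcond : Q[E.indicator (fun _ => (1 : ℝ))|mα.comap Prod.fst]
      =ᵐ[Q] Q[E.indicator (fun _ => (1 : ℝ))|G.comap Prod.fst])
    {g : α → ℝ} (hg : Integrable g P) :
    ∫ p in E, g p.1 ∂Q = ∫ p in E, P[g|H] p.1 ∂Q := by
  subst hQ
  have hG := hGH.trans hH
  calc ∫ p in E, g p.1 ∂Q = ∫ p in E, (Q.map Prod.fst)[(Q.map Prod.fst)[g|H]|G] p.1 ∂Q :=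
        (setIntegral_comp_fst_eq_condExp rfl hG hE hcond hg).trans (integral_congr_ae
          (ae_restrict_of_ae (ae_eq_comp_fst_of_map_eq rfl (condExp_condExp_of_le hGH hH).symm)))
    _ = _ := (setIntegral_comp_fst_eq_condExp rfl hG hE hcond integrable_condExp).symm

end Marginal

section RightContinuity

variable {α β : Type*} {mα : MeasurableSpace α} {μ : Measure α}

/-- A limsup along `s ↓ t` of `F s`-measurable versions is `F t`-measurable by
right-continuity. -/
lemma AEStronglyMeasurable.comap_of_forall_gt {F : ℝ → MeasurableSpace β} (hF : Monotone F)
    {t : ℝ} (hright : F t = ⨅ s ∈ Ioi t, F s) {f : α → β} {Y : α → ℝ}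
    (h : ∀ s, t < s → AEStronglyMeasurable[(F s).comap f] Y μ) :
    AEStronglyMeasurable[(F t).comap f] Y μ := by
  obtain ⟨σ, hσ_anti, hσ_gt, hσ_lim⟩ := exists_seq_strictAnti_tendsto t
  choose Yσ hYσ_meas hYσ_ae using fun j => h (σ j) (hσ_gt j)
  choose y hy_meas hy_eq using fun j => (hYσ_meas j).exists_eq_measurable_comp (mY := F (σ j))
  have hlimsup : Measurable[F t] fun b => limsup (fun j => y j b) atTop := by
    rw [hright, measurable_iff_comap_le]
    refine le_iInf₂ fun s hs => measurable_iff_comap_le.1 ?_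
    obtain ⟨J, hJ⟩ := (hσ_lim.eventually (gt_mem_nhds hs)).exists
    rw [show (fun b => limsup (fun j => y j b) atTop) = fun b => limsup (fun j => y (j + J) b) atTop
      from funext fun b => (limsup_nat_add (fun j => y j b) J).symm]
    exact Measurable.limsup fun j => ((hy_meas (j + J)).measurable.mono
      (hF ((hσ_anti.antitone (Nat.le_add_left J j)).trans hJ.le)) le_rfl)
  refine ⟨fun a => limsup (fun j => y j (f a)) atTop,
    (hlimsup.comp (comap_measurable f)).stronglyMeasurable, ?_⟩
  filter_upwards [ae_all_iff.2 hYσ_ae] with a ha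
  have : (fun j => y j (f a)) = fun _ => Y a :=
    funext fun j => by rw [ha j, hy_eq j, Function.comp_apply]
  rw [this, limsup_const]

end RightContinuity

section Stable

variable {α β : Type*} [mα : MeasurableSpace α] [MeasurableSpace β] [TopologicalSpace β]
  {P : Measure α} {μs : ℕ → Measure (α × β)} {μ : Measure (α × β)}

def TendstoStably (μs : ℕ → Measure (α × β)) (μ : Measure (α × β)) : Prop :=
  ∀ ξ : α × β → ℝ, Measurable ξ → (∃ C : ℝ, ∀ p, |ξ p| ≤ C) →
    (∀ a : α, Continuous fun b : β => ξ (a, b)) →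
    Tendsto (fun n => ∫ p, ξ p ∂(μs n)) atTop (𝓝 (∫ p, ξ p ∂μ))

namespace TendstoStably

lemma map_fst_eq (hst : TendstoStably μs μ) [IsFiniteMeasure μ] [IsFiniteMeasure P]
    (hμs : ∀ n, (μs n).map Prod.fst = P) : μ.map Prod.fst = P := by
  refine Measure.ext fun A hA => ?_
  have hpre : MeasurableSet (Prod.fst ⁻¹' A : Set (α × β)) := measurable_fst hA
  have hlim := hst ((Prod.fst ⁻¹' A).indicator 1) (measurable_const.indicator hpre)
    ⟨1, fun p => by by_cases hp : p ∈ Prod.fst ⁻¹' A <;> simp [hp]⟩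
    (fun a => by by_cases ha : a ∈ A <;> simp [indicator, ha, continuous_const])
  simp_rw [integral_indicator_one hpre, ← map_measureReal_apply measurable_fst hA, hμs] at hlim
  rw [← ENNReal.toReal_eq_toReal_iff' (measure_ne_top _ _) (measure_ne_top _ _)]
  exact tendsto_nhds_unique hlim tendsto_const_nhds

lemma tendsto_integral_comp_fst_mul_ramp [OpensMeasurableSpace β] (hst : TendstoStably μs μ)
    {f : α → ℝ} (hf : Measurable f) {C : ℝ} (hfC : ∀ a, |f a| ≤ C) {θ : β → ℝ}
    (hθ : Continuous θ) {t s : ℝ} (hts : t < s) :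
    Tendsto (fun n => ∫ p, f p.1 * ramp t s (θ p.2) ∂(μs n)) atTop
      (𝓝 (∫ p, f p.1 * ramp t s (θ p.2) ∂μ)) :=
  hst _ ((hf.comp measurable_fst).mul
      ((continuous_ramp t s).measurable.comp (hθ.measurable.comp measurable_snd)))
    ⟨C, fun p => by
      rw [abs_mul]
      exact (mul_le_of_le_one_right (abs_nonneg _) (abs_ramp_le_one hts _)).trans (hfC _)⟩
    (fun a => (continuous_const.mul ((continuous_ramp t s).comp hθ) :
      Continuous fun b => f a * ramp t s (θ b)))

lemma setIntegral_comp_fst_eq_condExp [OpensMeasurableSpace β] (hst : TendstoStably μs μ)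
    [∀ n, IsFiniteMeasure (μs n)] [IsFiniteMeasure μ] (hμs : ∀ n, (μs n).map Prod.fst = P)
    (hμ : μ.map Prod.fst = P) {F : Filtration ℝ mα} {θ : β → ℝ} (hθ : Continuous θ) {t s : ℝ}
    (hts : t < s)
    (hb : ∀ n, ∀ u ∈ Ioc t s,
      (μs n)[{p | θ p.2 ≤ u}.indicator (fun _ => (1 : ℝ))|mα.comap Prod.fst]
        =ᵐ[μs n] (μs n)[{p | θ p.2 ≤ u}.indicator (fun _ => (1 : ℝ))|(F u).comap Prod.fst])
    {A : Set α} (hA : MeasurableSet A) :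
    ∫ p in {p | θ p.2 ≤ t}, A.indicator (fun _ => (1 : ℝ)) p.1 ∂μ
      = ∫ p in {p | θ p.2 ≤ t}, P[A.indicator (fun _ => (1 : ℝ))|F s] p.1 ∂μ := by
  have : IsFiniteMeasure P := hμ ▸ inferInstance
  have hθ' : Measurable fun p : α × β => θ p.2 := hθ.measurable.comp measurable_snd
  set f : α → ℝ := A.indicator fun _ => 1
  have hf1 : ∀ a, |f a| ≤ 1 := fun a => by by_cases ha : a ∈ A <;> simp [f, ha]
  have hf : Integrable f P := (integrable_const 1).indicator hA
  obtain ⟨k, hk, hk1, hke⟩ := exists_measurable_abs_le_ae_eq (μ := P)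
    (stronglyMeasurable_condExp.measurable.mono (F.le s) le_rfl) zero_le_one
    (ae_bdd_abs_condExp_of_ae_bdd_abs (m := F s) (ae_of_all _ hf1))
  have hk' : Integrable k P := integrable_condExp.congr hke.symm
  have hramp : ∀ s' ∈ Ioc t s,
      ∫ p, f p.1 * ramp t s' (θ p.2) ∂μ = ∫ p, k p.1 * ramp t s' (θ p.2) ∂μ := by
    intro s' hs'
    refine tendsto_nhds_unique ((hst.tendsto_integral_comp_fst_mul_ramp
      (measurable_const.indicator hA) hf1 hθ hs'.1).congr fun n => ?_)
      (hst.tendsto_integral_comp_fst_mul_ramp hk hk1 hθ hs'.1)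
    calc ∫ p, f p.1 * ramp t s' (θ p.2) ∂μs n = ∫ p, P[f|F s] p.1 * ramp t s' (θ p.2) ∂μs n :=
          integral_mul_ramp_eq_of_setIntegral_eq hθ' (integrable_comp_fst_of_map_eq (hμs n) hf)
            (integrable_comp_fst_of_map_eq (hμs n) integrable_condExp) hs'.1 fun u hu =>
            setIntegral_comp_fst_eq_condExp_of_le (hμs n) (F.mono (hu.2.trans hs'.2)) (F.le s)
              (measurableSet_le hθ' measurable_const) (hb n u ⟨hu.1, hu.2.trans hs'.2⟩) hf
      _ = ∫ p, k p.1 * ramp t s' (θ p.2) ∂μs n :=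
          integral_congr_ae ((ae_eq_comp_fst_of_map_eq (hμs n) hke.symm).mul EventuallyEq.rfl)
  calc ∫ p in {p | θ p.2 ≤ t}, f p.1 ∂μ = ∫ p in {p | θ p.2 ≤ t}, k p.1 ∂μ :=
        tendsto_nhds_unique_of_eventuallyEq
          (tendsto_integral_mul_ramp hθ' (integrable_comp_fst_of_map_eq hμ hf) t)
          (tendsto_integral_mul_ramp hθ' (integrable_comp_fst_of_map_eq hμ hk') t)
          (eventually_of_mem (Ioc_mem_nhdsGT hts) hramp)
    _ = _ := integral_congr_ae (ae_restrict_of_ae (ae_eq_comp_fst_of_map_eq hμ hke))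

end TendstoStably

end Stable

theorem stable_limit_preserves_properties_general
    {Ω : Type*} [m0 : MeasurableSpace Ω] (P : Measure Ω) [IsProbabilityMeasure P]
    (F : Filtration ℝ m0) (T : ℝ)
    (husual_right : ∀ t : ℝ, F t = ⨅ s ∈ Set.Ioi t, F s)
    (Pn : ℕ → Measure (Ω × Set.Icc (0 : ℝ) T)) (hPn : ∀ n, IsProbabilityMeasure (Pn n))
    (Pbar : Measure (Ω × Set.Icc (0 : ℝ) T)) (hPbar : IsProbabilityMeasure Pbar)
    -- (a) the Ω-marginal of each ℙ̄ₙ is ℙ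
    (ha : ∀ n, (Pn n).map Prod.fst = P)
    -- (b) ℙ̄ₙ[Θ ≤ t | 𝓕̄⁰] = ℙ̄ₙ[Θ ≤ t | 𝓕̄⁰_t] a.s., for every t ∈ [0,T]
    (hb : ∀ n, ∀ t ∈ Set.Icc (0 : ℝ) T,
      (Pn n)[Set.indicator {p : Ω × Set.Icc (0 : ℝ) T | (p.2 : ℝ) ≤ t}
          (fun _ => (1 : ℝ)) | MeasurableSpace.comap Prod.fst m0]
        =ᵐ[Pn n]
      (Pn n)[Set.indicator {p : Ω × Set.Icc (0 : ℝ) T | (p.2 : ℝ) ≤ t}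
          (fun _ => (1 : ℝ)) | MeasurableSpace.comap Prod.fst (F t)])
    -- ℙ̄ₙ → ℙ̄ stably
    (hstable : ∀ ξ : Ω × Set.Icc (0 : ℝ) T → ℝ,
      Measurable ξ → (∃ C : ℝ, ∀ p, |ξ p| ≤ C) →
      (∀ ω : Ω, Continuous fun θ : Set.Icc (0 : ℝ) T => ξ (ω, θ)) →
      Tendsto (fun n => ∫ p, ξ p ∂(Pn n)) atTop (nhds (∫ p, ξ p ∂Pbar))) :
    Pbar.map Prod.fst = P ∧
      ∀ t ∈ Set.Icc (0 : ℝ) T,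
        Pbar[Set.indicator {p : Ω × Set.Icc (0 : ℝ) T | (p.2 : ℝ) ≤ t}
            (fun _ => (1 : ℝ)) | MeasurableSpace.comap Prod.fst m0]
          =ᵐ[Pbar]
        Pbar[Set.indicator {p : Ω × Set.Icc (0 : ℝ) T | (p.2 : ℝ) ≤ t}
            (fun _ => (1 : ℝ)) | MeasurableSpace.comap Prod.fst (F t)] := by
  have hst : TendstoStably Pn Pbar := hstable
  have hmap : Pbar.map Prod.fst = P := hst.map_fst_eq ha
  -- levels `u > T` are needed when `t = T`; there `{Θ ≤ u}` is everything
  have hb' : ∀ n, ∀ u, 0 ≤ u →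
      (Pn n)[{p : Ω × Icc (0 : ℝ) T | (p.2 : ℝ) ≤ u}.indicator (fun _ => (1 : ℝ))|m0.comap Prod.fst]
        =ᵐ[Pn n]
      (Pn n)[{p : Ω × Icc (0 : ℝ) T | (p.2 : ℝ) ≤ u}.indicator (fun _ => (1 : ℝ))|
        (F u).comap Prod.fst] := by
    intro n u hu
    rcases le_or_gt u T with huT | huT
    · exact hb n u ⟨hu, huT⟩
    · rw [show {p : Ω × Icc (0 : ℝ) T | (p.2 : ℝ) ≤ u} = univ from
          eq_univ_of_forall fun p => p.2.2.2.trans huT.le, indicator_univ,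
        condExp_const measurable_fst.comap_le,
        condExp_const ((MeasurableSpace.comap_mono (F.le u)).trans measurable_fst.comap_le)]
  refine ⟨hmap, fun t ht => ?_⟩
  have hE : MeasurableSet {p : Ω × Icc (0 : ℝ) T | (p.2 : ℝ) ≤ t} :=
    measurableSet_le (measurable_subtype_coe.comp measurable_snd) measurable_const
  refine condExp_ae_eq_of_aestronglyMeasurable_condExp (MeasurableSpace.comap_mono (F.le t))
    measurable_fst.comap_le (AEStronglyMeasurable.comap_of_forall_gt (fun _ _ => F.mono)
      (husual_right t) fun s hts => ⟨_, stronglyMeasurable_condExp,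
        (condExp_indicator_comap_fst_ae_eq hmap (F.le s) hE fun A hA =>
          hst.setIntegral_comp_fst_eq_condExp ha hmap continuous_subtype_val hts
            (fun n u hu => hb' n u (ht.1.trans hu.1.le)) hA).symm⟩)

/-- **Stable limits preserve the marginal and the conditional-independence property
(Proposition C.2).**
On the enlarged space `Ω̄ = Ω × [0,T]` with `𝓕̄ = 𝓕 ⊗ 𝓑([0,T])`, `Θ(ω,θ) = θ`,
`𝓕̄⁰ = 𝓕 ⊗ {∅,[0,T]}` and `𝓕̄⁰_t = 𝓕_t ⊗ {∅,[0,T]}`: if each `ℙ̄ₙ` has `Ω`-marginal `ℙ`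
and satisfies `ℙ̄ₙ[Θ ≤ t | 𝓕̄⁰] = ℙ̄ₙ[Θ ≤ t | 𝓕̄⁰_t]` a.s. for all `t ∈ [0,T]`, and if
`ℙ̄ₙ → ℙ̄` stably, then `ℙ̄` has the same two properties. -/
theorem stable_limit_preserves_properties
    {Ω : Type*} [m0 : MeasurableSpace Ω] (P : Measure Ω) [IsProbabilityMeasure P]
    (F : Filtration ℝ m0) (T : ℝ) (hT : 0 < T)
    (husual_complete : ∀ s : Set Ω, MeasurableSet s → P s = 0 → MeasurableSet[F 0] s)
    (husual_right : ∀ t : ℝ, F t = ⨅ s ∈ Set.Ioi t, F s)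
    (Pn : ℕ → Measure (Ω × Set.Icc (0 : ℝ) T)) (hPn : ∀ n, IsProbabilityMeasure (Pn n))
    (Pbar : Measure (Ω × Set.Icc (0 : ℝ) T)) (hPbar : IsProbabilityMeasure Pbar)
    -- (a) the Ω-marginal of each ℙ̄ₙ is ℙ
    (ha : ∀ n, (Pn n).map Prod.fst = P)
    -- (b) ℙ̄ₙ[Θ ≤ t | 𝓕̄⁰] = ℙ̄ₙ[Θ ≤ t | 𝓕̄⁰_t] a.s., for every t ∈ [0,T]
    (hb : ∀ n, ∀ t ∈ Set.Icc (0 : ℝ) T,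
      (Pn n)[Set.indicator {p : Ω × Set.Icc (0 : ℝ) T | (p.2 : ℝ) ≤ t}
          (fun _ => (1 : ℝ)) | MeasurableSpace.comap Prod.fst m0]
        =ᵐ[Pn n]
      (Pn n)[Set.indicator {p : Ω × Set.Icc (0 : ℝ) T | (p.2 : ℝ) ≤ t}
          (fun _ => (1 : ℝ)) | MeasurableSpace.comap Prod.fst (F t)])
    -- ℙ̄ₙ → ℙ̄ stably
    (hstable : ∀ ξ : Ω × Set.Icc (0 : ℝ) T → ℝ,
      Measurable ξ → (∃ C : ℝ, ∀ p, |ξ p| ≤ C) →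
      (∀ ω : Ω, Continuous fun θ : Set.Icc (0 : ℝ) T => ξ (ω, θ)) →
      Tendsto (fun n => ∫ p, ξ p ∂(Pn n)) atTop (nhds (∫ p, ξ p ∂Pbar))) :
    Pbar.map Prod.fst = P ∧
      ∀ t ∈ Set.Icc (0 : ℝ) T,
        Pbar[Set.indicator {p : Ω × Set.Icc (0 : ℝ) T | (p.2 : ℝ) ≤ t}
            (fun _ => (1 : ℝ)) | MeasurableSpace.comap Prod.fst m0]
          =ᵐ[Pbar]
        Pbar[Set.indicator {p : Ω × Set.Icc (0 : ℝ) T | (p.2 : ℝ) ≤ t}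
            (fun _ => (1 : ℝ)) | MeasurableSpace.comap Prod.fst (F t)] :=
  stable_limit_preserves_properties_general (m0 := m0) P F T husual_right Pn hPn Pbar hPbar ha hb
    hstable
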